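/- Optimal sandwich with continuous processors (continuous form of the Optimal Sandwich proposition). Let X be a random vector taking values almost surely in a compact set B ⊆ ℝⁿ (a bounded source), let d : ℝⁿ × ℝⁿ → [0,∞) be continuous, let K be a finite nonempty type, let α* : ℝⁿ → K be Borel measurable and β* : K → ℝⁿ be a codec with expected distortion D₀ := E[d(X, β*(α*(X)))]. Let α : ℝᵐ → K be a Borel measurable regular encoder (every fiber has nonempty interior), let β : K → ℝᵐ be injective, let L : K → ℕ be a codelength function, and let π : K ≃ K be a permutation. Set p(k) := P(α*(X) = k) and q(k) := 2^{−L(π(k))}. Then for every ε > 0 there exist continuous functions f : ℝⁿ → ℝᵐ and g : ℝᵐ → ℝⁿ such that the sandwiched codec satisfies E[d(X, g(β(α(f(X)))))] ≤ D₀ + ε and E[L(α(f(X)))] ≤ H(p) + D(p‖q) + ε. -/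

import Mathlib

/-!
Up to an arbitrarily small probability the reference encoder `αstar` can be replayed through
the sandwich. By inner regularity of the law of `X`, each fiber of `αstar` contains a closed set
carrying all but a small part of its mass; these closed sets are pairwise disjoint, so Urysohn's
lemma gives a continuous `f` sending the `k`-th one into the fiber of `α` over `π k`, and a
continuous `g` sending `β (π k)` back to `βstar k`. Off the exceptional event
the sandwiched codec then has the distortion of `(αstar, βstar)` and the codelength
`L (π (αstar X))`, whose expectation `-∑ p log₂ q` is the cross entropy `H(p) + D(p‖q)`.
On the exceptional event distortion and codelength are bounded, because `X` lives in a compact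
set and `K` is finite.
-/

open MeasureTheory Set Function
open scoped ENNReal

theorem exists_continuous_eqOn_const_of_pairwise_disjoint {X Y ι : Type*} [TopologicalSpace X]
    [NormalSpace X] [AddCommMonoid Y] [Module ℝ Y] [TopologicalSpace Y] [ContinuousAdd Y]
    [ContinuousSMul ℝ Y] [Fintype ι] {C : ι → Set X} (hC : ∀ i, IsClosed (C i))
    (hdisj : Pairwise (Disjoint on C)) (v : ι → Y) :
    ∃ f : X → Y, Continuous f ∧ ∀ i, EqOn f (fun _ => v i) (C i) := by
  have hsep : ∀ i, ∃ u : C(X, ℝ), EqOn u 0 (⋃ (j) (_ : j ≠ i), C j) ∧ EqOn u 1 (C i) :=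
    fun i => (exists_continuous_zero_one_of_isClosed
      (isClosed_iUnion_of_finite fun j => isClosed_iUnion_of_finite fun _ => hC j) (hC i)
      (disjoint_iUnion_left.2 fun j => disjoint_iUnion_left.2 fun hj => hdisj hj)).imp
      fun _ h => ⟨h.1, h.2.1⟩
  choose u hu0 hu1 using hsep
  refine ⟨fun x => ∑ i, u i x • v i,
    continuous_finsetSum _ fun i _ => (u i).continuous.smul continuous_const, fun i x hx => ?_⟩
  show ∑ j, u j x • v j = v i
  rw [Finset.sum_eq_single i (fun j _ hji => ?_) (by simp), hu1 i hx, Pi.one_apply, one_smul]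
  rw [hu0 j (mem_iUnion₂.2 ⟨i, Ne.symm hji, hx⟩), Pi.zero_apply, zero_smul]

theorem exists_isClosed_subset_fiber_measure_compl_iUnion_le {α K : Type*} [TopologicalSpace α]
    [MeasurableSpace α] [OpensMeasurableSpace α] [MeasurableSpace K] [MeasurableSingletonClass K]
    [Fintype K] (μ : Measure α) [IsFiniteMeasure μ] [μ.WeaklyRegular] {κ : α → K}
    (hκ : Measurable κ) {ε : ℝ≥0∞} (hε : ε ≠ 0) :
    ∃ C : K → Set α, (∀ k, IsClosed (C k)) ∧ (∀ k, C k ⊆ κ ⁻¹' {k}) ∧ μ (⋃ k, C k)ᶜ ≤ ε := by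
  have hc : ε / Fintype.card K ≠ 0 := ENNReal.div_ne_zero.2 ⟨hε, ENNReal.natCast_ne_top _⟩
  choose C hCsub hC hCμ using fun k =>
    (hκ (measurableSet_singleton k)).exists_isClosed_sdiff_lt (measure_ne_top μ _) hc
  refine ⟨C, hC, hCsub, ?_⟩
  calc μ (⋃ k, C k)ᶜ ≤ μ (⋃ k, κ ⁻¹' {k} \ C k) :=
        measure_mono fun x hx => mem_iUnion.2 ⟨κ x, rfl, fun h => hx (mem_iUnion.2 ⟨_, h⟩)⟩
    _ ≤ ∑ k, μ (κ ⁻¹' {k} \ C k) := measure_iUnion_fintype_le _ _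
    _ ≤ ∑ _k : K, ε / Fintype.card K := Finset.sum_le_sum fun k _ => (hCμ k).le
    _ ≤ ε := by
      rw [Finset.sum_const, nsmul_eq_mul, Finset.card_univ]
      exact ENNReal.mul_div_le

theorem integral_le_integral_add_of_eqOn_compl {Ω : Type*} [MeasurableSpace Ω]
    {μ : Measure Ω} [IsFiniteMeasure μ] {φ ψ : Ω → ℝ} {S : Set Ω} {M ε : ℝ}
    (hS : MeasurableSet S) (hφ : AEStronglyMeasurable φ μ) (hψ : AEStronglyMeasurable ψ μ)
    (hφM : ∀ᵐ ω ∂μ, φ ω ∈ Icc 0 M) (hψM : ∀ᵐ ω ∂μ, ψ ω ∈ Icc 0 M) (heq : EqOn φ ψ Sᶜ)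
    (hSM : μ.real S * M ≤ ε) :
    ∫ ω, φ ω ∂μ ≤ ∫ ω, ψ ω ∂μ + ε := by
  have hint : ∀ {χ : Ω → ℝ}, AEStronglyMeasurable χ μ → (∀ᵐ ω ∂μ, χ ω ∈ Icc 0 M) →
      Integrable χ μ := fun hχ hχM =>
    .of_bound hχ M (hχM.mono fun _ h => (Real.norm_of_nonneg h.1).trans_le h.2)
  have hind : Integrable (S.indicator fun _ => M) μ := (integrable_const M).indicator hS
  have hle : φ ≤ᵐ[μ] fun ω => ψ ω + S.indicator (fun _ => M) ω := by
    filter_upwards [hφM, hψM] with ω hφω hψω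
    by_cases hω : ω ∈ S
    · rw [indicator_of_mem hω]
      linarith [hφω.2, hψω.1]
    · rw [indicator_of_notMem hω, heq hω, add_zero]
  calc ∫ ω, φ ω ∂μ ≤ ∫ ω, ψ ω + S.indicator (fun _ => M) ω ∂μ :=
        integral_mono_ae (hint hφ hφM) ((hint hψ hψM).add hind) hle
    _ = ∫ ω, ψ ω ∂μ + μ.real S * M := by
      rw [integral_add (hint hψ hψM) hind, integral_indicator_const _ hS, smul_eq_mul]
    _ ≤ ∫ ω, ψ ω ∂μ + ε := by gcongr

theorem integral_comp_eq_sum_measureReal_preimage {Ω K E : Type*} [MeasurableSpace Ω]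
    [MeasurableSpace K] [MeasurableSingletonClass K] [Fintype K] [NormedAddCommGroup E]
    [NormedSpace ℝ E] [CompleteSpace E] {μ : Measure Ω} [IsFiniteMeasure μ] {κ : Ω → K}
    (hκ : Measurable κ) (h : K → E) : ∫ ω, h (κ ω) ∂μ = ∑ k, μ.real (κ ⁻¹' {k}) • h k := by
  rw [← integral_map hκ.aemeasurable .of_discrete, integral_fintype .of_finite]
  simp_rw [map_measureReal_apply hκ (measurableSet_singleton _)]

theorem Real.neg_sum_mul_logb_add_sum_mul_logb_div_rpow_neg {ι : Type*} (s : Finset ι) {b : ℝ}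
    (hb : 0 < b) (hb1 : b ≠ 1) (p ℓ : ι → ℝ) :
    -∑ i ∈ s, p i * logb b (p i) + ∑ i ∈ s, p i * logb b (p i / b ^ (-ℓ i))
      = ∑ i ∈ s, p i * ℓ i := by
  rw [neg_add_eq_sub, ← Finset.sum_sub_distrib]
  refine Finset.sum_congr rfl fun i _ => ?_
  rcases eq_or_ne (p i) 0 with h | h
  · simp [h]
  · rw [logb_div h (rpow_pos_of_pos hb _).ne', logb_rpow hb hb1]
    ring

theorem exists_continuous_sandwich_eq_off_small_set {Ω V W Y K : Type*} [MeasurableSpace Ω]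
    [MetricSpace V] [MeasurableSpace V] [BorelSpace V] [NormedAddCommGroup W]
    [NormedSpace ℝ W] [NormedAddCommGroup Y] [NormedSpace ℝ Y] [MeasurableSpace K]
    [MeasurableSingletonClass K] [Fintype K] (P : Measure Ω) [IsFiniteMeasure P] {X : Ω → V}
    (hX : Measurable X) {αstar : V → K} (hαstar : Measurable αstar) (βstar : K → Y)
    {α : W → K} (hα : Function.Surjective α) {β : K → W} (hβ : Function.Injective β)
    (π : Equiv.Perm K) {δ : ℝ} (hδ : 0 < δ) :
    ∃ f : V → W, ∃ g : W → Y, Continuous f ∧ Continuous g ∧ (∀ k, g (β k) = βstar (π.symm k)) ∧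
      ∃ S : Set Ω, MeasurableSet S ∧ P.real S ≤ δ ∧ ∀ ω ∉ S, α (f (X ω)) = π (αstar (X ω)) := by
  choose y hy using hα
  obtain ⟨C, hC, hCsub, hCμ⟩ := exists_isClosed_subset_fiber_measure_compl_iUnion_le (P.map X)
    hαstar (ENNReal.ofReal_pos.2 hδ).ne'
  obtain ⟨f, hf, hfC⟩ := exists_continuous_eqOn_const_of_pairwise_disjoint hC
    (fun j k hjk => ((disjoint_singleton.2 hjk).preimage αstar).mono (hCsub j) (hCsub k))
    (fun k => y (π k))
  obtain ⟨g, hg, hgβ⟩ := exists_continuous_eqOn_const_of_pairwise_disjoint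
    (fun _ => isClosed_singleton) (fun j k hjk => disjoint_singleton.2 (hβ.ne hjk))
    (fun k => βstar (π.symm k))
  have hCmeas : MeasurableSet (⋃ k, C k)ᶜ :=
    (MeasurableSet.iUnion fun k => (hC k).measurableSet).compl
  refine ⟨f, g, hf, hg, fun k => hgβ k rfl, X ⁻¹' (⋃ k, C k)ᶜ, hX hCmeas, ?_, fun ω hω => ?_⟩
  · rw [measureReal_def, ← Measure.map_apply hX hCmeas]
    exact ENNReal.toReal_le_of_le_ofReal hδ.le hCμ
  · obtain ⟨k, hk⟩ := mem_iUnion.1 (not_not.1 hω)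
    rw [hfC k hk, hy, hCsub k hk]

theorem optimal_sandwich_continuous_general {n m : ℕ} {K : Type*} [Fintype K]
    {Ω : Type*} [MeasurableSpace Ω] (P : Measure Ω) [IsProbabilityMeasure P]
    (X : Ω → (Fin n → ℝ)) (hX : Measurable X)
    (B : Set (Fin n → ℝ)) (hB : IsCompact B) (hXB : ∀ᵐ ω ∂P, X ω ∈ B)
    (d : (Fin n → ℝ) × (Fin n → ℝ) → ℝ) (hd : Continuous d) (hd0 : ∀ z, 0 ≤ d z)
    (αstar : (Fin n → ℝ) → K)
    (hαstar : ∀ k : K, MeasurableSet {x : Fin n → ℝ | αstar x = k})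
    (βstar : K → (Fin n → ℝ))
    (α : (Fin m → ℝ) → K)
    (hα : ∀ k : K, MeasurableSet {y : Fin m → ℝ | α y = k})
    (hreg : ∀ k : K, (interior {y : Fin m → ℝ | α y = k}).Nonempty)
    (β : K → (Fin m → ℝ)) (hβ : Function.Injective β)
    (L : K → ℕ) (π : Equiv.Perm K)
    (p : K → ℝ) (hp : ∀ k, p k = (P {ω | αstar (X ω) = k}).toReal)
    (q : K → ℝ) (hq : ∀ k, q k = (2 : ℝ) ^ (-(L (π k) : ℝ))) :
    ∀ ε : ℝ, 0 < ε →
      ∃ f : (Fin n → ℝ) → (Fin m → ℝ), ∃ g : (Fin m → ℝ) → (Fin n → ℝ),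
        Continuous f ∧ Continuous g ∧
        (∫ ω, d (X ω, g (β (α (f (X ω))))) ∂P)
          ≤ (∫ ω, d (X ω, βstar (αstar (X ω))) ∂P) + ε ∧
        (∫ ω, (L (α (f (X ω))) : ℝ) ∂P)
          ≤ (-∑ k : K, p k * Real.logb 2 (p k))
            + (∑ k : K, p k * Real.logb 2 (p k / q k)) + ε := by
  intro ε hε
  let : MeasurableSpace K := ⊤
  have hαstar_meas : Measurable αstar := measurable_to_countable' hαstar
  have hα_meas : Measurable α := measurable_to_countable' hα
  obtain ⟨M, hM⟩ : BddAbove (insert 0 (d '' (B ×ˢ range βstar) ∪ range fun k => (L k : ℝ))) :=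
    (((hB.prod (finite_range βstar).isCompact).bddAbove_image hd.continuousOn).union
      (finite_range _).bddAbove).insert 0
  have hM0 : 0 ≤ M := hM (mem_insert 0 _)
  have hdM : ∀ᵐ ω ∂P, ∀ k, d (X ω, βstar k) ∈ Icc 0 M := hXB.mono fun ω hω k =>
    ⟨hd0 _, hM (.inr (.inl (mem_image_of_mem d (mk_mem_prod hω (mem_range_self k)))))⟩
  have hLM : ∀ k, (L k : ℝ) ∈ Icc 0 M := fun k =>
    ⟨by positivity, hM (.inr (.inr (mem_range_self k)))⟩
  obtain ⟨f, g, hf, hg, hgβ, S, hS, hPS, hαf⟩ := exists_continuous_sandwich_eq_off_small_set P hX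
    hαstar_meas βstar (fun k => (hreg k).mono interior_subset) hβ π
    (div_pos hε (by positivity : 0 < M + 1))
  have hSM : P.real S * M ≤ ε := by
    calc P.real S * M ≤ ε / (M + 1) * (M + 1) := by gcongr; linarith
      _ = ε := div_mul_cancel₀ ε (by positivity)
  refine ⟨f, g, hf, hg, ?_, ?_⟩
  · refine integral_le_integral_add_of_eqOn_compl hS
      (by fun_prop : Measurable _).aestronglyMeasurable
      (by fun_prop : Measurable _).aestronglyMeasurable
      (hdM.mono fun ω h => hgβ _ ▸ h _) (hdM.mono fun ω h => h _) (fun ω hω => ?_) hSM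
    simp only [hαf ω hω, hgβ, Equiv.symm_apply_apply]
  · have hcross : -∑ k, p k * Real.logb 2 (p k) + ∑ k, p k * Real.logb 2 (p k / q k)
        = ∫ ω, (L (π (αstar (X ω))) : ℝ) ∂P := by
      simp only [hq, Real.neg_sum_mul_logb_add_sum_mul_logb_div_rpow_neg _ two_pos
        (by norm_num : (2 : ℝ) ≠ 1)]
      rw [integral_comp_eq_sum_measureReal_preimage (κ := fun ω => αstar (X ω))
        (hαstar_meas.comp hX) fun k => (L (π k) : ℝ)]
      simp only [hp, smul_eq_mul, measureReal_def]
      rfl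
    rw [hcross]
    exact integral_le_integral_add_of_eqOn_compl hS
      ((Measurable.of_discrete (f := fun k => (L k : ℝ))).comp
        (hα_meas.comp (hf.measurable.comp hX))).aestronglyMeasurable
      ((Measurable.of_discrete (f := fun k => (L (π k) : ℝ))).comp
        (hαstar_meas.comp hX)).aestronglyMeasurable
      (ae_of_all _ fun _ => hLM _) (ae_of_all _ fun _ => hLM _)
      (fun ω hω => by simp only [hαf ω hω]) hSM

/-- **Optimal sandwich with continuous processors** (continuous form of the Optimal
Sandwich proposition).  Let `X` be a random vector taking values a.s. in a compact set
`B ⊆ ℝⁿ`, let `d` be a continuous nonnegative distortion measure, let `(αstar, βstar)`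
be a codec for `ℝⁿ` with Borel-measurable encoder and expected distortion `D₀`, and let
`(α, β)` be a regular standard codec for `ℝᵐ` with measurable encoder fibers, each fiber
having nonempty interior, and injective decoder.  With `p k = P(αstar (X) = k)` and
`q k = 2^{-L(π k)}`, for every `ε > 0` there are continuous pre- and post-processors
`f, g` such that the sandwiched codec has expected distortion at most `D₀ + ε` and
expected rate at most `H(p) + D(p‖q) + ε`. -/
theorem optimal_sandwich_continuous {n m : ℕ} {K : Type*} [Fintype K] [Nonempty K]
    {Ω : Type*} [MeasurableSpace Ω] (P : Measure Ω) [IsProbabilityMeasure P]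
    (X : Ω → (Fin n → ℝ)) (hX : Measurable X)
    (B : Set (Fin n → ℝ)) (hB : IsCompact B) (hXB : ∀ᵐ ω ∂P, X ω ∈ B)
    (d : (Fin n → ℝ) × (Fin n → ℝ) → ℝ) (hd : Continuous d) (hd0 : ∀ z, 0 ≤ d z)
    (αstar : (Fin n → ℝ) → K)
    (hαstar : ∀ k : K, MeasurableSet {x : Fin n → ℝ | αstar x = k})
    (βstar : K → (Fin n → ℝ))
    (α : (Fin m → ℝ) → K)
    (hα : ∀ k : K, MeasurableSet {y : Fin m → ℝ | α y = k})
    (hreg : ∀ k : K, (interior {y : Fin m → ℝ | α y = k}).Nonempty)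
    (β : K → (Fin m → ℝ)) (hβ : Function.Injective β)
    (L : K → ℕ) (π : Equiv.Perm K)
    (p : K → ℝ) (hp : ∀ k, p k = (P {ω | αstar (X ω) = k}).toReal)
    (q : K → ℝ) (hq : ∀ k, q k = (2 : ℝ) ^ (-(L (π k) : ℝ))) :
    ∀ ε : ℝ, 0 < ε →
      ∃ f : (Fin n → ℝ) → (Fin m → ℝ), ∃ g : (Fin m → ℝ) → (Fin n → ℝ),
        Continuous f ∧ Continuous g ∧
        (∫ ω, d (X ω, g (β (α (f (X ω))))) ∂P)
          ≤ (∫ ω, d (X ω, βstar (αstar (X ω))) ∂P) + ε ∧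
        (∫ ω, (L (α (f (X ω))) : ℝ) ∂P)
          ≤ (-∑ k : K, p k * Real.logb 2 (p k))
            + (∑ k : K, p k * Real.logb 2 (p k / q k)) + ε :=
  optimal_sandwich_continuous_general P X hX B hB hXB d hd hd0 αstar hαstar βstar α hα hreg β hβ L π
    p hp q hq
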